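/- Proposition (sufficient conditions for sample optimality with general probes): Let Q be a probing family on ℝ^d containing all linear predictors and closed under vector manipulation. Say a finite set of points of ℝ^d is in general position if every subset of at most d of the points is linearly independent and no d+1 of the points lie in a common (d−1)-dimensional affine subspace; define Cover's 1-capacity Cap₁(Q) as the largest N such that every set of N points of ℝ^d in general position is classically shattered by Q. Suppose φ* : X → ℝ^d is ∼-invariant, there exist a maximal invariant M and f ∈ Q with M(x) = pred(f(φ*(x))) for all x, and the representations φ*(X) lie in general position. If Cap₁(Q) ≥ n∼, then φ* is sample optimal for the ∼-invariant tasks T∼ and Q. -/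

import Mathlib

open scoped Classical
open Finset

namespace ISSL

/-- Number of equivalence classes of the equivalence relation `r` on `X`. -/
noncomputable def nequiv {X : Type*} (r : Setoid X) : ℕ := Nat.card (Quotient r)

noncomputable instance instFintypeQuot {X : Type*} [Fintype X] (r : Setoid X) :
    Fintype (Quotient r) := Fintype.ofFinite _

/-- `M` is a maximal invariant for `r`: `M x = M x'` iff `x ∼ x'`. -/
def IsMaximalInvariant {X : Type*} (r : Setoid X) {k : ℕ} (M : X → Fin k) : Prop :=
  ∀ x x', M x = M x' ↔ r x x'

/-- A map is `∼`-invariant if it is constant on equivalence classes. -/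
def IsInvariant {X : Type*} (r : Setoid X) {Z : Type*} (φ : X → Z) : Prop :=
  ∀ x x', r x x' → φ x = φ x'

/-- Argmax prediction `pred(v) = argmax_i v[i]` for a vector-output predictor. -/
noncomputable def predArg {k : ℕ} [NeZero k] (v : Fin k → ℝ) : Fin k :=
  Classical.choose ((Finset.univ : Finset (Fin k)).exists_max_image v
    ⟨⟨0, Nat.pos_of_ne_zero (NeZero.ne k)⟩, Finset.mem_univ _⟩)

/-- Binary prediction `1[v ≥ 0]` from a scalar logit. -/
noncomputable def predBin (v : Fin 1 → ℝ) : Fin 2 := if 0 ≤ v 0 then 1 else 0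

/-- A probing family on `ℝ^d`: for each output arity `k`, a set of maps `ℝ^d → ℝ^k`. -/
structure ProbingFamily (d : ℕ) where
  mem : (k : ℕ) → Set ((Fin d → ℝ) → (Fin k → ℝ))

/-- The linear probing family: all maps `z ↦ Wᵀ z`. -/
def linearFamily (d : ℕ) : ProbingFamily d :=
  ⟨fun k => {f | ∃ W : Matrix (Fin d) (Fin k) ℝ, ∀ z j, f z j = ∑ i, W i j * z i}⟩

/-- `Q` contains all linear predictors. -/
def ContainsLinear {d : ℕ} (Q : ProbingFamily d) : Prop :=
  ∀ k, (linearFamily d).mem k ⊆ Q.mem k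

/-- `Q` is closed under vector manipulation: concatenation of two members, coordinate
indexing of a member, and sums of two scalar-output members. -/
def ClosedUnderVectorManipulation {d : ℕ} (Q : ProbingFamily d) : Prop :=
  (∀ (k k' : ℕ) (f : (Fin d → ℝ) → Fin k → ℝ) (g : (Fin d → ℝ) → Fin k' → ℝ),
      f ∈ Q.mem k → g ∈ Q.mem k' → (fun z => Fin.append (f z) (g z)) ∈ Q.mem (k + k')) ∧
  (∀ (k : ℕ) (f : (Fin d → ℝ) → Fin k → ℝ), f ∈ Q.mem k →
      ∀ i : Fin k, (fun z (_ : Fin 1) => f z i) ∈ Q.mem 1) ∧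
  (∀ f g : (Fin d → ℝ) → Fin 1 → ℝ, f ∈ Q.mem 1 → g ∈ Q.mem 1 →
      (fun z j => f z j + g z j) ∈ Q.mem 1)

/-- The classification rules induced by the probing family at arity `k`: for `k = 2`
a scalar-output predictor with sign prediction, for `k ≥ 3` a `k`-output predictor with
argmax prediction. -/
noncomputable def rules {d : ℕ} (Q : ProbingFamily d) : (k : ℕ) → Set ((Fin d → ℝ) → Fin k)
  | 0 => ∅
  | 1 => ∅
  | 2 => {h | ∃ f ∈ Q.mem 1, ∀ z, h z = predBin (f z)}
  | (n + 3) => {h | ∃ f ∈ Q.mem (n + 3), ∀ z, h z = predArg (f z)}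

/-- A `k`-ary `∼`-invariant task: a joint distribution on `X × Fin k` such that for every
input the most likely label is unique and invariant under `∼`. -/
structure InvTask (X : Type*) [Fintype X] (r : Setoid X) (k : ℕ) where
  p : X → Fin k → ℝ
  nonneg : ∀ x y, 0 ≤ p x y
  sum_one : ∑ x : X, ∑ y : Fin k, p x y = 1
  label : X → Fin k
  label_argmax : ∀ x y, y ≠ label x → p x y < p x (label x)
  label_inv : ∀ x x', r x x' → label x = label x'

variable {X : Type*} [Fintype X] {r : Setoid X} {d k : ℕ}

/-- Population 0-1 risk of a classification rule `h` through encoder `φ` on task `t`. -/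
noncomputable def risk (t : InvTask X r k) (φ : X → Fin d → ℝ)
    (h : (Fin d → ℝ) → Fin k) : ℝ :=
  ∑ x : X, ∑ y : Fin k, t.p x y * (if y = h (φ x) then 0 else 1)

/-- Bayes error of task `t`. -/
noncomputable def bayes (t : InvTask X r k) : ℝ := 1 - ∑ x : X, t.p x (t.label x)

/-- `φ` is population optimal: the best probe realizes the Bayes error on every invariant task. -/
noncomputable def PopOptimal (r : Setoid X) (Q : ProbingFamily d)
    (φ : X → Fin d → ℝ) : Prop :=
  ∀ k : ℕ, 2 ≤ k → k ≤ nequiv r → ∀ t : InvTask X r k,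
    sInf ((fun h => risk t φ h) '' rules Q k) = bayes t

/-- Input marginal of task `t`. -/
noncomputable def marginal (t : InvTask X r k) (x : X) : ℝ := ∑ y : Fin k, t.p x y

/-- Empirical 0-1 risk of rule `h` on a dataset of inputs labeled by the most likely label. -/
noncomputable def empRisk (t : InvTask X r k) (φ : X → Fin d → ℝ)
    (h : (Fin d → ℝ) → Fin k) {n : ℕ} (D : Fin n → X) : ℝ :=
  (∑ i : Fin n, if t.label (D i) = h (φ (D i)) then (0 : ℝ) else 1) / n

/-- `h` is an empirical risk minimizer on dataset `D`. -/
noncomputable def IsERM (Q : ProbingFamily d) (t : InvTask X r k) (φ : X → Fin d → ℝ)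
    {n : ℕ} (D : Fin n → X) (h : (Fin d → ℝ) → Fin k) : Prop :=
  h ∈ rules Q k ∧ ∀ h' ∈ rules Q k, empRisk t φ h D ≤ empRisk t φ h' D

/-- Excess risk of ERMs: worst population risk of an ERM minus the Bayes error. -/
noncomputable def excessRisk (Q : ProbingFamily d) (t : InvTask X r k)
    (φ : X → Fin d → ℝ) {n : ℕ} (D : Fin n → X) : ℝ :=
  sSup ((fun h => risk t φ h) '' {h | IsERM Q t φ D h}) - bayes t

/-- Expected excess risk over datasets of `n` i.i.d. inputs labeled by the most likely label. -/
noncomputable def expExcess (Q : ProbingFamily d) (t : InvTask X r k)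
    (φ : X → Fin d → ℝ) (n : ℕ) : ℝ :=
  ∑ D : Fin n → X, (∏ i, marginal t (D i)) * excessRisk Q t φ D

/-- Worst-case (over invariant tasks) expected excess risk of ERMs. -/
noncomputable def worstExcess (r : Setoid X) (Q : ProbingFamily d)
    (φ : X → Fin d → ℝ) (n : ℕ) : ℝ :=
  sSup {e : ℝ | ∃ k : ℕ, 2 ≤ k ∧ k ≤ nequiv r ∧ ∃ t : InvTask X r k, e = expExcess Q t φ n}

/-- `φ` is sample optimal: population optimal and minimizing the worst-case expected
excess risk of ERMs among population-optimal encoders, for every sample size. -/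
noncomputable def SampleOptimal (r : Setoid X) (Q : ProbingFamily d)
    (φ : X → Fin d → ℝ) : Prop :=
  PopOptimal r Q φ ∧
    ∀ n : ℕ, 1 ≤ n → ∀ φ' : X → Fin d → ℝ, PopOptimal r Q φ' →
      worstExcess r Q φ n ≤ worstExcess r Q φ' n

/-- Probability of an equivalence class under the input marginal of `t`. -/
noncomputable def classProb (t : InvTask X r k) (c : Quotient r) : ℝ :=
  ∑ x : X, if Quotient.mk r x = c then marginal t x else 0

/-- Conditional probability of label `y` given the equivalence class `c` under `t`. -/
noncomputable def classCond (t : InvTask X r k) (c : Quotient r) (y : Fin k) : ℝ :=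
  (∑ x : X, if Quotient.mk r x = c then t.p x y else 0) / classProb t c

/-- `φ` is `(X,∼)`-shattered by `Q`: every invariant binary labeling is realized. -/
noncomputable def InvShattered (r : Setoid X) (Q : ProbingFamily d)
    (φ : X → Fin d → ℝ) : Prop :=
  ∀ c : X → Fin 2, IsInvariant r c → ∃ f ∈ Q.mem 1, ∀ x, c x = predBin (f (φ x))

/-- A set `Z ⊆ ℝ^d` is classically shattered by `Q`. -/
noncomputable def ClassicallyShattered {d : ℕ} (Q : ProbingFamily d)
    (Z : Set (Fin d → ℝ)) : Prop :=
  ∀ c : (Fin d → ℝ) → Fin 2, ∃ f ∈ Q.mem 1, ∀ z ∈ Z, c z = predBin (f z)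


/-- A finite set of points of `ℝ^d` is in general position if every subset of at most `d`
of the points is linearly independent and no `d+1` of the points lie in a common
`(d-1)`-dimensional affine subspace. -/
def InGeneralPosition {d : ℕ} (Z : Set (Fin d → ℝ)) : Prop :=
  (∀ s : Finset (Fin d → ℝ), (↑s : Set (Fin d → ℝ)) ⊆ Z → s.card ≤ d →
      LinearIndependent ℝ (fun z : (s : Set (Fin d → ℝ)) => (z : Fin d → ℝ))) ∧
  (∀ s : Finset (Fin d → ℝ), (↑s : Set (Fin d → ℝ)) ⊆ Z → s.card = d + 1 →
      ¬∃ A : AffineSubspace ℝ (Fin d → ℝ),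
          Module.finrank ℝ A.direction = d - 1 ∧ (↑s : Set (Fin d → ℝ)) ⊆ (A : Set (Fin d → ℝ)))


/-! ### Auxiliary lemmas -/

lemma zero_mem_Q {Q : ProbingFamily d} (hQlin : ContainsLinear Q) (m : ℕ) :
    (fun (_ : Fin d → ℝ) (_ : Fin m) => (0:ℝ)) ∈ Q.mem m :=
  hQlin m ⟨0, by intro z j; simp⟩

lemma rules_nonempty {Q : ProbingFamily d} (hQlin : ContainsLinear Q) {m : ℕ}
    (hm : 2 ≤ m) : (rules Q m).Nonempty := by
  match m, hm with
  | 2, _ =>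
    exact ⟨fun z => predBin (fun _ => 0),
      ⟨fun _ _ => 0, zero_mem_Q hQlin 1, fun z => rfl⟩⟩
  | (n+3), _ =>
    exact ⟨fun z => predArg (fun _ => 0),
      ⟨fun _ _ => 0, zero_mem_Q hQlin _, fun z => rfl⟩⟩

lemma risk_eq (t : InvTask X r k) (φ : X → Fin d → ℝ) (h : (Fin d → ℝ) → Fin k) :
    risk t φ h = 1 - ∑ x : X, t.p x (h (φ x)) := by
  have hx : ∀ x : X, ∑ y : Fin k, t.p x y * (if y = h (φ x) then (0:ℝ) else 1)
      = (∑ y : Fin k, t.p x y) - t.p x (h (φ x)) := by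
    intro x
    have hy : ∀ y : Fin k, t.p x y * (if y = h (φ x) then (0:ℝ) else 1)
        = t.p x y - (if y = h (φ x) then t.p x y else 0) := by
      intro y; by_cases hy : y = h (φ x) <;> simp [hy]
    rw [Finset.sum_congr rfl (fun y _ => hy y), Finset.sum_sub_distrib,
      Finset.sum_ite_eq' Finset.univ (h (φ x)) (t.p x), if_pos (Finset.mem_univ _)]
  unfold risk
  rw [Finset.sum_congr rfl (fun x _ => hx x), Finset.sum_sub_distrib, t.sum_one]

lemma p_le_label (t : InvTask X r k) (x : X) (y : Fin k) :
    t.p x y ≤ t.p x (t.label x) := by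
  by_cases hy : y = t.label x
  · rw [hy]
  · exact (t.label_argmax x y hy).le

lemma bayes_le_risk (t : InvTask X r k) (φ : X → Fin d → ℝ)
    (h : (Fin d → ℝ) → Fin k) : bayes t ≤ risk t φ h := by
  rw [risk_eq, bayes]
  have : ∑ x : X, t.p x (h (φ x)) ≤ ∑ x : X, t.p x (t.label x) :=
    Finset.sum_le_sum fun x _ => p_le_label t x _
  linarith

lemma risk_eq_bayes_of (t : InvTask X r k) (φ : X → Fin d → ℝ)
    {h : (Fin d → ℝ) → Fin k} (hl : ∀ x, h (φ x) = t.label x) :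
    risk t φ h = bayes t := by
  rw [risk_eq, bayes]
  congr 1
  exact Finset.sum_congr rfl fun x _ => by rw [hl x]

lemma label_eq_of_risk_eq (t : InvTask X r k) (φ : X → Fin d → ℝ)
    {h : (Fin d → ℝ) → Fin k} (hr : risk t φ h = bayes t) :
    ∀ x, h (φ x) = t.label x := by
  intro x
  rw [risk_eq, bayes] at hr
  have hsum : ∑ x : X, (t.p x (t.label x) - t.p x (h (φ x))) = 0 := by
    rw [Finset.sum_sub_distrib]; linarith
  have hterm := (Finset.sum_eq_zero_iff_of_nonneg
    (fun x _ => sub_nonneg.mpr (p_le_label t x _))).1 hsum x (Finset.mem_univ x)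
  by_contra hne
  have := t.label_argmax x _ hne
  linarith [sub_eq_zero.mp hterm]

lemma risk_le_one (t : InvTask X r k) (φ : X → Fin d → ℝ)
    (h : (Fin d → ℝ) → Fin k) : risk t φ h ≤ 1 := by
  rw [risk_eq]
  have : (0:ℝ) ≤ ∑ x : X, t.p x (h (φ x)) :=
    Finset.sum_nonneg fun x _ => t.nonneg x _
  linarith

lemma bayes_nonneg (t : InvTask X r k) : 0 ≤ bayes t := by
  rw [bayes]
  have h1 : ∑ x : X, t.p x (t.label x) ≤ ∑ x : X, ∑ y : Fin k, t.p x y :=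
    Finset.sum_le_sum fun x _ =>
      Finset.single_le_sum (f := fun y => t.p x y) (fun y _ => t.nonneg x y)
        (Finset.mem_univ _)
  rw [t.sum_one] at h1
  linarith

lemma marginal_nonneg (t : InvTask X r k) (x : X) : 0 ≤ marginal t x :=
  Finset.sum_nonneg fun y _ => t.nonneg x y

lemma sum_marginal (t : InvTask X r k) : ∑ x : X, marginal t x = 1 := t.sum_one

lemma marginal_le_one (t : InvTask X r k) (x : X) : marginal t x ≤ 1 := by
  have h := Finset.single_le_sum (f := fun x => marginal t x)
    (fun x _ => marginal_nonneg t x) (Finset.mem_univ x)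
  rwa [sum_marginal] at h

/-- A simple invariant task with given invariant labeling. -/
noncomputable def mkTask (r : Setoid X) {k : ℕ} (hk : 2 ≤ k)
    (hX : 0 < Fintype.card X) (c : X → Fin k) (hc : IsInvariant r c) :
    InvTask X r k where
  p x y := (if y = c x then 2 else 1) / ((Fintype.card X) * (k + 1))
  nonneg x y := by
    have hX' : (0:ℝ) < (Fintype.card X : ℝ) := by exact_mod_cast hX
    have hk' : (0:ℝ) < (k:ℝ) + 1 := by positivity
    apply div_nonneg _ (by positivity)
    split <;> norm_num
  sum_one := by
    have hX' : (0:ℝ) < (Fintype.card X : ℝ) := by exact_mod_cast hX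
    have hk' : (0:ℝ) < (k:ℝ) + 1 := by positivity
    have inner : ∀ x : X, ∑ y : Fin k,
        ((if y = c x then (2:ℝ) else 1) / ((Fintype.card X) * (k + 1)))
        = ((k:ℝ)+1) / ((Fintype.card X) * (k + 1)) := by
      intro x
      rw [← Finset.sum_div]
      congr 1
      have hy : ∀ y : Fin k, (if y = c x then (2:ℝ) else 1)
          = 1 + (if y = c x then (1:ℝ) else 0) := fun y => by split <;> norm_num
      rw [Finset.sum_congr rfl fun y _ => hy y, Finset.sum_add_distrib,
        Finset.sum_ite_eq' Finset.univ (c x) (fun _ => (1:ℝ)),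
        if_pos (Finset.mem_univ _)]
      simp [Finset.card_univ]
    rw [Finset.sum_congr rfl fun x _ => inner x, Finset.sum_const,
      Finset.card_univ, nsmul_eq_mul]
    field_simp
  label := c
  label_argmax := fun x y hy => by
    have hX' : (0:ℝ) < (Fintype.card X : ℝ) := by exact_mod_cast hX
    have hk' : (0:ℝ) < (k:ℝ) + 1 := by positivity
    simp only
    rw [if_neg hy]
    simp only [if_true]
    have hden : (0:ℝ) < (Fintype.card X : ℝ) * ((k:ℝ)+1) := by positivity
    have h12 : (1:ℝ) < 2 := by norm_num
    exact (div_lt_div_iff_of_pos_right hden).mpr h12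
  label_inv := hc

lemma realizable_of_popOptimal {Q : ProbingFamily d}
    (hQlin : ContainsLinear Q) (hX : 0 < Fintype.card X) {φ' : X → Fin d → ℝ}
    (hpop : PopOptimal r Q φ') {m : ℕ} (hm2 : 2 ≤ m) (hmn : m ≤ nequiv r)
    (c : X → Fin m) (hc : IsInvariant r c) :
    ∃ h ∈ rules Q m, ∀ x, h (φ' x) = c x := by
  set t := mkTask r hm2 hX c hc with ht
  have hinf := hpop m hm2 hmn t
  have hne : ((fun h => risk t φ' h) '' rules Q m).Nonempty :=
    (rules_nonempty hQlin hm2).image _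
  have hfin : ((fun h => risk t φ' h) '' rules Q m).Finite := by
    apply Set.Finite.subset
      (Set.finite_range (fun g : X → Fin m => 1 - ∑ x : X, t.p x (g x)))
    rintro v ⟨h, hh, rfl⟩
    exact ⟨fun x => h (φ' x), (risk_eq t φ' h).symm⟩
  have hmem := hne.csInf_mem hfin
  rw [hinf] at hmem
  obtain ⟨h, hh, hrisk⟩ := hmem
  exact ⟨h, hh, label_eq_of_risk_eq t φ' hrisk⟩

lemma predArg_eq {m : ℕ} [NeZero m] (v : Fin m → ℝ) (i : Fin m)
    (h : ∀ j, j ≠ i → v j < v i) : predArg v = i := by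
  unfold predArg
  have hspec := Classical.choose_spec ((Finset.univ : Finset (Fin m)).exists_max_image v
    ⟨⟨0, Nat.pos_of_ne_zero (NeZero.ne m)⟩, Finset.mem_univ _⟩)
  by_contra hne
  exact absurd (hspec.2 i (Finset.mem_univ i)) (not_le.mpr (h _ hne))

lemma concat_mem {Q : ProbingFamily d} (hQlin : ContainsLinear Q)
    (hcc : ∀ (k k' : ℕ) (f : (Fin d → ℝ) → Fin k → ℝ) (g : (Fin d → ℝ) → Fin k' → ℝ),
      f ∈ Q.mem k → g ∈ Q.mem k' → (fun z => Fin.append (f z) (g z)) ∈ Q.mem (k + k')) :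
    ∀ (m : ℕ) (g : Fin m → ((Fin d → ℝ) → (Fin 1 → ℝ))), (∀ i, g i ∈ Q.mem 1) →
      ∃ F ∈ Q.mem m, ∀ z i, F z i = g i z 0 := by
  intro m
  induction m with
  | zero => exact fun g hg => ⟨fun _ _ => 0, zero_mem_Q hQlin 0, fun z i => i.elim0⟩
  | succ m ih =>
    intro g hg
    obtain ⟨F, hF, hFe⟩ := ih (fun i => g i.castSucc) (fun i => hg _)
    refine ⟨fun z => Fin.append (F z) (g (Fin.last m) z),
      hcc m 1 F _ hF (hg _), ?_⟩
    intro z i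
    refine Fin.lastCases ?_ ?_ i
    · have hlast : Fin.last m = Fin.natAdd m (0 : Fin 1) := by
        ext; simp
      rw [hlast]
      show Fin.append (F z) (g (Fin.natAdd m 0) z) (Fin.natAdd m (0 : Fin 1))
        = g (Fin.natAdd m 0) z 0
      rw [Fin.append_right]
    · intro i
      show Fin.append (F z) (g (Fin.last m) z) (Fin.castAdd 1 i)
        = g (Fin.castAdd 1 i) z 0
      rw [Fin.append_left, hFe]
      rfl

lemma realizable_of_invShattered {Q : ProbingFamily d}
    (hQlin : ContainsLinear Q) (hQclosed : ClosedUnderVectorManipulation Q)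
    {φ : X → Fin d → ℝ} (hshat : InvShattered r Q φ) {m : ℕ} (hm2 : 2 ≤ m)
    (c : X → Fin m) (hc : IsInvariant r c) :
    ∃ h ∈ rules Q m, ∀ x, h (φ x) = c x := by
  match m, hm2 with
  | 2, _ =>
    obtain ⟨f, hf, hfx⟩ := hshat c hc
    exact ⟨fun z => predBin (f z), ⟨f, hf, fun z => rfl⟩, fun x => (hfx x).symm⟩
  | (m+3), _ =>
    have key : ∀ j : Fin (m+3), ∃ f ∈ Q.mem 1, ∀ x,
        (c x = j → 0 ≤ f (φ x) 0) ∧ (c x ≠ j → f (φ x) 0 < 0) := by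
      intro j
      obtain ⟨f, hf, hfx⟩ := hshat (fun x => if c x = j then 1 else 0)
        (fun x x' hxx' => by simp [hc x x' hxx'])
      refine ⟨f, hf, fun x => ⟨?_, ?_⟩⟩
      · intro hcx
        have hthis := hfx x
        rw [if_pos hcx] at hthis
        by_contra hneg
        rw [predBin, if_neg hneg] at hthis
        exact absurd hthis (by decide)
      · intro hcx
        have hthis := hfx x
        rw [if_neg hcx] at hthis
        by_contra hpos
        push_neg at hpos
        rw [predBin, if_pos hpos] at hthis
        exact absurd hthis (by decide)
    choose f hfQ hfP using key
    obtain ⟨F, hF, hFe⟩ := concat_mem hQlin hQclosed.1 (m+3) f hfQ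
    refine ⟨fun z => predArg (F z), ⟨F, hF, fun z => rfl⟩, fun x => ?_⟩
    apply predArg_eq
    intro j hj
    rw [hFe, hFe]
    have h1 := (hfP (c x) x).1 rfl
    have h2 := (hfP j x).2 (Ne.symm hj)
    linarith

lemma popOptimal_of_realizable {Q : ProbingFamily d} {φ : X → Fin d → ℝ}
    (hrz : ∀ m : ℕ, 2 ≤ m → ∀ c : X → Fin m, IsInvariant r c →
      ∃ h ∈ rules Q m, ∀ x, h (φ x) = c x) :
    PopOptimal r Q φ := by
  intro m hm2 hmn t
  obtain ⟨h0, hh0, he⟩ := hrz m hm2 t.label t.label_inv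
  apply le_antisymm
  · exact csInf_le ⟨bayes t, by rintro v ⟨h, _, rfl⟩; exact bayes_le_risk t φ h⟩
      ⟨h0, hh0, risk_eq_bayes_of t φ he⟩
  · exact le_csInf ⟨_, ⟨h0, hh0, rfl⟩⟩
      (by rintro v ⟨h, _, rfl⟩; exact bayes_le_risk t φ h)

lemma empRisk_nonneg (t : InvTask X r k) (φ : X → Fin d → ℝ)
    (h : (Fin d → ℝ) → Fin k) {n : ℕ} (D : Fin n → X) :
    0 ≤ empRisk t φ h D :=
  div_nonneg (Finset.sum_nonneg fun i _ => by split <;> norm_num) (Nat.cast_nonneg n)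

lemma empRisk_eq_zero (t : InvTask X r k) (φ : X → Fin d → ℝ)
    {h : (Fin d → ℝ) → Fin k} {n : ℕ} {D : Fin n → X}
    (hmatch : ∀ i, h (φ (D i)) = t.label (D i)) : empRisk t φ h D = 0 := by
  unfold empRisk
  rw [Finset.sum_eq_zero fun i _ => if_pos (hmatch i).symm, zero_div]

lemma match_of_empRisk_zero (t : InvTask X r k) (φ : X → Fin d → ℝ)
    {h : (Fin d → ℝ) → Fin k} {n : ℕ} {D : Fin n → X}
    (hz : empRisk t φ h D = 0) : ∀ i, h (φ (D i)) = t.label (D i) := by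
  intro i
  have hn0 : (n:ℝ) ≠ 0 := by
    have : 0 < n := i.pos
    positivity
  have hsum : ∑ i : Fin n, (if t.label (D i) = h (φ (D i)) then (0:ℝ) else 1) = 0 := by
    unfold empRisk at hz
    rcases div_eq_zero_iff.mp hz with h' | h'
    · exact h'
    · exact absurd h' hn0
  have hterm := (Finset.sum_eq_zero_iff_of_nonneg
    (fun i _ => by split <;> norm_num)).1 hsum i (Finset.mem_univ i)
  by_contra hne
  rw [if_neg (fun hh => hne hh.symm)] at hterm
  norm_num at hterm

lemma isERM_of_match {Q : ProbingFamily d} (t : InvTask X r k)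
    (φ : X → Fin d → ℝ) {h : (Fin d → ℝ) → Fin k} (hh : h ∈ rules Q k)
    {n : ℕ} {D : Fin n → X} (hmatch : ∀ i, h (φ (D i)) = t.label (D i)) :
    IsERM Q t φ D h := by
  refine ⟨hh, fun h' _ => ?_⟩
  rw [empRisk_eq_zero t φ hmatch]
  exact empRisk_nonneg t φ h' D

lemma excess_le {Q : ProbingFamily d} {m : ℕ} (t : InvTask X r m)
    {φ φ' : X → Fin d → ℝ} (hφinv : IsInvariant r φ)
    (hrzφ : ∃ h ∈ rules Q m, ∀ x, h (φ x) = t.label x)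
    (hrzφ' : ∀ c : X → Fin m, IsInvariant r c → ∃ h ∈ rules Q m, ∀ x, h (φ' x) = c x)
    {n : ℕ} (D : Fin n → X) :
    excessRisk Q t φ D ≤ excessRisk Q t φ' D := by
  obtain ⟨h0, hh0, he0⟩ := hrzφ
  unfold excessRisk
  apply sub_le_sub_right
  apply csSup_le_csSup
  · exact ⟨1, by rintro v ⟨h, _, rfl⟩; exact risk_le_one t φ' h⟩
  · exact ⟨risk t φ h0, h0, isERM_of_match t φ hh0 (fun i => he0 _), rfl⟩
  · rintro v ⟨h, ⟨hhmem, hhmin⟩, rfl⟩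
    have hz : empRisk t φ h D = 0 := by
      have h1 := hhmin h0 hh0
      rw [empRisk_eq_zero t φ (fun i => he0 _)] at h1
      exact le_antisymm h1 (empRisk_nonneg t φ h D)
    have hmatch := match_of_empRisk_zero t φ hz
    obtain ⟨h', hh', he'⟩ := hrzφ' (fun x => h (φ x))
      (fun x x' hxx' => by simp only [hφinv x x' hxx'])
    refine ⟨h', isERM_of_match t φ' hh' (fun i => by rw [he']; exact hmatch i), ?_⟩
    show risk t φ' h' = risk t φ h
    rw [risk_eq, risk_eq]
    congr 1
    exact Finset.sum_congr rfl fun x _ => by rw [he' x]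

lemma excess_nonneg {Q : ProbingFamily d} {m : ℕ} (t : InvTask X r m)
    {φ' : X → Fin d → ℝ}
    (hrz : ∃ h ∈ rules Q m, ∀ x, h (φ' x) = t.label x)
    {n : ℕ} (D : Fin n → X) : 0 ≤ excessRisk Q t φ' D := by
  obtain ⟨h0, hh0, he0⟩ := hrz
  have hmem : bayes t ∈ (fun h => risk t φ' h) '' {h | IsERM Q t φ' D h} :=
    ⟨h0, isERM_of_match t φ' hh0 (fun i => he0 _), risk_eq_bayes_of t φ' he0⟩
  have hle := le_csSup ⟨1, by rintro v ⟨h, _, rfl⟩; exact risk_le_one t φ' h⟩ hmem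
  unfold excessRisk
  linarith

lemma excess_le_one {Q : ProbingFamily d} {m : ℕ} (t : InvTask X r m)
    {φ : X → Fin d → ℝ} {n : ℕ} (D : Fin n → X) :
    excessRisk Q t φ D ≤ 1 := by
  have h1 : sSup ((fun h => risk t φ h) '' {h | IsERM Q t φ D h}) ≤ 1 :=
    Real.sSup_le (by rintro v ⟨h, _, rfl⟩; exact risk_le_one t φ h) zero_le_one
  have h2 := bayes_nonneg t
  unfold excessRisk
  linarith

lemma prodweight_nonneg {m : ℕ} (t : InvTask X r m) {n : ℕ} (D : Fin n → X) :
    0 ≤ ∏ i, marginal t (D i) :=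
  Finset.prod_nonneg fun i _ => marginal_nonneg t _

lemma expExcess_mono {Q : ProbingFamily d} {m : ℕ} (t : InvTask X r m)
    {φ φ' : X → Fin d → ℝ} {n : ℕ}
    (hpt : ∀ D : Fin n → X, excessRisk Q t φ D ≤ excessRisk Q t φ' D) :
    expExcess Q t φ n ≤ expExcess Q t φ' n :=
  Finset.sum_le_sum fun D _ =>
    mul_le_mul_of_nonneg_left (hpt D) (prodweight_nonneg t D)

lemma expExcess_nonneg {Q : ProbingFamily d} {m : ℕ} (t : InvTask X r m)
    {φ' : X → Fin d → ℝ} {n : ℕ}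
    (h : ∀ D : Fin n → X, 0 ≤ excessRisk Q t φ' D) : 0 ≤ expExcess Q t φ' n :=
  Finset.sum_nonneg fun D _ => mul_nonneg (prodweight_nonneg t D) (h D)

lemma expExcess_le_card {Q : ProbingFamily d} {m : ℕ} (t : InvTask X r m)
    (φ' : X → Fin d → ℝ) (n : ℕ)
    (he : ∀ D : Fin n → X, 0 ≤ excessRisk Q t φ' D) :
    expExcess Q t φ' n ≤ (Fintype.card (Fin n → X) : ℝ) := by
  have h1 : expExcess Q t φ' n ≤ ∑ _D : Fin n → X, (1:ℝ) := by
    apply Finset.sum_le_sum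
    intro D _
    have hw : ∏ i, marginal t (D i) ≤ 1 :=
      Finset.prod_le_one (fun i _ => marginal_nonneg t _) (fun i _ => marginal_le_one t _)
    have hmm := mul_le_mul hw (excess_le_one t (φ := φ') D) (he D) zero_le_one
    simpa using hmm
  rw [Finset.sum_const, Finset.card_univ, nsmul_eq_mul, mul_one] at h1
  exact h1

/-! ### Geometry: extending sets in general position -/

lemma affineIndependent_of_linearIndependent (s : Finset (Fin d → ℝ))
    (h : LinearIndependent ℝ (fun z : (s : Set (Fin d → ℝ)) => (z : Fin d → ℝ))) :
    AffineIndependent ℝ (fun z : (s : Set (Fin d → ℝ)) => (z : Fin d → ℝ)) := by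
  rw [affineIndependent_iff]
  intro u w hw hsum e he
  exact linearIndependent_iff'.1 h u w hsum e he

lemma finrank_vectorSpan_of_gp {Z : Set (Fin d → ℝ)} (hZ : InGeneralPosition Z)
    {s : Finset (Fin d → ℝ)} (hsub : (↑s : Set (Fin d → ℝ)) ⊆ Z)
    (hcard : s.card ≤ d) (hne : s.Nonempty) :
    Module.finrank ℝ (vectorSpan ℝ (↑s : Set (Fin d → ℝ))) = s.card - 1 := by
  have hli := hZ.1 s hsub hcard
  have hai := affineIndependent_of_linearIndependent s hli
  have hc : Fintype.card (↑s : Set (Fin d → ℝ)) = (s.card - 1) + 1 := by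
    have h1 : Fintype.card (↑s : Set (Fin d → ℝ)) = s.card := by
      simp [Finset.coe_sort_coe]
    rw [h1]
    have := hne.card_pos
    omega
  have hfin := hai.finrank_vectorSpan hc
  rwa [Subtype.range_coe] at hfin

lemma span_ne_top_of_card_lt {s : Finset (Fin d → ℝ)} (hcard : s.card < d) :
    Submodule.span ℝ (↑s : Set (Fin d → ℝ)) ≠ ⊤ := by
  intro htop
  have h1 := finrank_span_finset_le_card (R := ℝ) s
  rw [Set.finrank, htop, finrank_top, Module.finrank_fin_fun] at h1
  omega

lemma affineSpan_ne_top_of_gp (hd : 1 ≤ d) {Z : Set (Fin d → ℝ)}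
    (hZ : InGeneralPosition Z) {s : Finset (Fin d → ℝ)}
    (hsub : (↑s : Set (Fin d → ℝ)) ⊆ Z) (hcard : s.card ≤ d) :
    affineSpan ℝ (↑s : Set (Fin d → ℝ)) ≠ ⊤ := by
  rcases s.eq_empty_or_nonempty with rfl | hne
  · rw [Finset.coe_empty, AffineSubspace.span_empty]
    exact AffineSubspace.bot_ne_top ℝ (Fin d → ℝ) (Fin d → ℝ)
  · intro htop
    have h1 := finrank_vectorSpan_of_gp hZ hsub hcard hne
    have h2 : vectorSpan ℝ (↑s : Set (Fin d → ℝ)) = ⊤ := by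
      rw [← direction_affineSpan, htop, AffineSubspace.direction_top]
    rw [h2, finrank_top, Module.finrank_fin_fun] at h1
    omega

open MeasureTheory in
lemma exists_gp_insert (hd : 1 ≤ d) (S : Finset (Fin d → ℝ))
    (hS : InGeneralPosition (↑S : Set (Fin d → ℝ))) :
    ∃ p, p ∉ S ∧ InGeneralPosition (↑(insert p S) : Set (Fin d → ℝ)) := by
  classical
  set I1 : Set (Finset (Fin d → ℝ)) := {s | s ⊆ S ∧ s.card ≤ d - 1} with hI1
  set I2 : Set (Finset (Fin d → ℝ)) := {s | s ⊆ S ∧ s.card ≤ d} with hI2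
  set BadL : Set (Fin d → ℝ) :=
    ⋃ s ∈ I1, (Submodule.span ℝ (↑s : Set (Fin d → ℝ)) : Set (Fin d → ℝ)) with hBadL
  set BadA : Set (Fin d → ℝ) :=
    ⋃ s ∈ I2, ((affineSpan ℝ (↑s : Set (Fin d → ℝ)) : AffineSubspace ℝ (Fin d → ℝ)) :
      Set (Fin d → ℝ)) with hBadA
  have hc1 : I1.Countable :=
    ((S.powerset.finite_toSet).subset (fun s hs => Finset.mem_coe.mpr
      (Finset.mem_powerset.mpr hs.1))).countable
  have hc2 : I2.Countable :=
    ((S.powerset.finite_toSet).subset (fun s hs => Finset.mem_coe.mpr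
      (Finset.mem_powerset.mpr hs.1))).countable
  have hL0 : volume BadL = 0 := by
    rw [hBadL, measure_biUnion_null_iff hc1]
    rintro s ⟨hsub, hcard⟩
    exact Measure.addHaar_submodule _ _ (span_ne_top_of_card_lt (by omega))
  have hA0 : volume BadA = 0 := by
    rw [hBadA, measure_biUnion_null_iff hc2]
    rintro s ⟨hsub, hcard⟩
    exact Measure.addHaar_affineSubspace _ _
      (affineSpan_ne_top_of_gp hd hS (Finset.coe_subset.mpr hsub) hcard)
  have hBad : volume (BadL ∪ BadA) = 0 := measure_union_null hL0 hA0
  obtain ⟨p, hp⟩ : ∃ p, p ∉ BadL ∪ BadA := by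
    by_contra h
    push_neg at h
    rw [Set.eq_univ_of_forall h] at hBad
    exact (IsOpen.measure_ne_zero volume isOpen_univ Set.univ_nonempty) hBad
  have hpL : ∀ s : Finset (Fin d → ℝ), s ⊆ S → s.card ≤ d - 1 →
      p ∉ Submodule.span ℝ (↑s : Set (Fin d → ℝ)) := fun s h1 h2 hmem =>
    hp (Set.mem_union_left _ (Set.mem_biUnion (Set.mem_setOf.mpr ⟨h1, h2⟩) hmem))
  have hpA : ∀ s : Finset (Fin d → ℝ), s ⊆ S → s.card ≤ d →
      p ∉ (affineSpan ℝ (↑s : Set (Fin d → ℝ)) : Set (Fin d → ℝ)) := fun s h1 h2 hmem =>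
    hp (Set.mem_union_right _ (Set.mem_biUnion (Set.mem_setOf.mpr ⟨h1, h2⟩) hmem))
  have hpS : p ∉ S := by
    intro hpS
    exact hpA {p} (Finset.singleton_subset_iff.mpr hpS)
      (by rw [Finset.card_singleton]; omega)
      (subset_affineSpan ℝ _ (by simp))
  refine ⟨p, hpS, ?_, ?_⟩
  · -- linear condition
    intro t hts htc
    have htf : t ⊆ insert p S := by
      intro z hz
      exact_mod_cast hts (Finset.mem_coe.mpr hz)
    by_cases hpt : p ∈ t
    · have ht'S : t.erase p ⊆ S := by
        intro z hz
        rcases Finset.mem_insert.mp (htf (Finset.mem_of_mem_erase hz)) with h | h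
        · exact absurd h (Finset.ne_of_mem_erase hz)
        · exact h
      have hli := hS.1 (t.erase p) (Finset.coe_subset.mpr ht'S)
        (by have := Finset.card_erase_of_mem hpt; omega)
      have hsp : p ∉ Submodule.span ℝ (↑(t.erase p) : Set (Fin d → ℝ)) :=
        hpL _ ht'S (by have := Finset.card_erase_of_mem hpt; omega)
      have hins := LinearIndepOn.id_insert (s := (↑(t.erase p) : Set (Fin d → ℝ))) hli hsp
      have hset : (insert p (↑(t.erase p) : Set (Fin d → ℝ))) = ↑t := by
        rw [← Finset.coe_insert, Finset.insert_erase hpt]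
      rw [← hset]
      exact hins
    · exact hS.1 t (Finset.coe_subset.mpr
        ((Finset.subset_insert_iff_of_notMem hpt).mp htf)) htc
  · -- affine condition
    intro t hts htc
    have htf : t ⊆ insert p S := by
      intro z hz
      exact_mod_cast hts (Finset.mem_coe.mpr hz)
    by_cases hpt : p ∈ t
    · rintro ⟨A, hA, htA⟩
      have ht'S : t.erase p ⊆ S := by
        intro z hz
        rcases Finset.mem_insert.mp (htf (Finset.mem_of_mem_erase hz)) with h | h
        · exact absurd h (Finset.ne_of_mem_erase hz)
        · exact h
      have hcard' : (t.erase p).card = d := by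
        rw [Finset.card_erase_of_mem hpt, htc]
        omega
      have hne' : (t.erase p).Nonempty := by
        rw [← Finset.card_pos, hcard']; omega
      have hfr : Module.finrank ℝ
          (vectorSpan ℝ (↑(t.erase p) : Set (Fin d → ℝ))) = d - 1 := by
        rw [finrank_vectorSpan_of_gp hS (Finset.coe_subset.mpr ht'S) hcard'.le hne', hcard']
      have hle : affineSpan ℝ (↑(t.erase p) : Set (Fin d → ℝ)) ≤ A := by
        apply affineSpan_le.mpr
        intro z hz
        exact htA (Finset.mem_coe.mpr
          (Finset.mem_of_mem_erase (Finset.mem_coe.mp hz)))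
      have hdir : (affineSpan ℝ (↑(t.erase p) : Set (Fin d → ℝ))).direction
          = A.direction := by
        apply Submodule.eq_of_le_of_finrank_eq (AffineSubspace.direction_le hle)
        rw [direction_affineSpan, hfr, hA]
      obtain ⟨x0, hx0⟩ := hne'
      have hAeq : affineSpan ℝ (↑(t.erase p) : Set (Fin d → ℝ)) = A :=
        AffineSubspace.ext_of_direction_eq hdir
          ⟨x0, subset_affineSpan ℝ _ (Finset.mem_coe.mpr hx0),
            htA (Finset.mem_coe.mpr (Finset.mem_of_mem_erase hx0))⟩
      apply hpA (t.erase p) ht'S hcard'.le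
      rw [hAeq]
      exact htA (Finset.mem_coe.mpr hpt)
    · exact hS.2 t (Finset.coe_subset.mpr
        ((Finset.subset_insert_iff_of_notMem hpt).mp htf)) htc

lemma exists_gp_superset (hd : 1 ≤ d) :
    ∀ (j : ℕ) (S : Finset (Fin d → ℝ)), InGeneralPosition (↑S : Set (Fin d → ℝ)) →
      ∃ Z : Finset (Fin d → ℝ), S ⊆ Z ∧ Z.card = S.card + j ∧
        InGeneralPosition (↑Z : Set (Fin d → ℝ)) := by
  intro j
  induction j with
  | zero => exact fun S hS => ⟨S, Finset.Subset.refl S, rfl, hS⟩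
  | succ j ih =>
    intro S hS
    obtain ⟨p, hpS, hgp⟩ := exists_gp_insert hd S hS
    obtain ⟨Z, hsub, hcard, hZ⟩ := ih (insert p S) hgp
    refine ⟨Z, (Finset.subset_insert p S).trans hsub, ?_, hZ⟩
    rw [hcard, Finset.card_insert_of_notMem hpS]
    omega

lemma card_X_pos (r : Setoid X) (hn : 2 ≤ nequiv r) : 0 < Fintype.card X := by
  rw [Fintype.card_pos_iff]
  have hq : Nonempty (Quotient r) := by
    have h0 : 0 < Nat.card (Quotient r) := lt_of_lt_of_le (by omega) hn
    exact (Nat.card_pos_iff.mp h0).1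
  obtain ⟨q⟩ := hq
  obtain ⟨x, -⟩ := q.exists_rep
  exact ⟨x⟩

lemma one_le_d (hX : Nonempty X) (φ : X → Fin d → ℝ)
    (hgp : InGeneralPosition (Set.range φ)) : 1 ≤ d := by
  by_contra hd
  have hd0 : d = 0 := by omega
  subst hd0
  obtain ⟨x⟩ := hX
  apply hgp.2 {φ x} (by simp) (by simp)
  refine ⟨⊤, ?_, by simp⟩
  rw [AffineSubspace.direction_top, finrank_top, Module.finrank_fin_fun]

lemma card_image_le_nequiv (r : Setoid X) (φ : X → Fin d → ℝ)
    (hφinv : IsInvariant r φ) : (Finset.univ.image φ).card ≤ nequiv r := by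
  have himg : Finset.univ.image φ
      = (Finset.univ.image (Quotient.mk r)).image (Quotient.lift φ hφinv) := by
    rw [Finset.image_image]
    exact Finset.image_congr (fun x _ => rfl)
  have heq : nequiv r = Fintype.card (Quotient r) := Nat.card_eq_fintype_card
  calc (Finset.univ.image φ).card
      ≤ (Finset.univ.image (Quotient.mk r)).card := by
        rw [himg]; exact Finset.card_image_le
    _ ≤ Fintype.card (Quotient r) := Finset.card_le_univ _
    _ = nequiv r := heq.symm

lemma invShattered_of_cap (r : Setoid X) (hn : 2 ≤ nequiv r) {Q : ProbingFamily d}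
    (φ : X → Fin d → ℝ) (hφinv : IsInvariant r φ)
    (hmax : ∀ x x', φ x = φ x' → r x x')
    (hgp : InGeneralPosition (Set.range φ))
    {N : ℕ} (hN : nequiv r ≤ N)
    (hshat : ∀ Z : Finset (Fin d → ℝ), Z.card = N →
      InGeneralPosition (↑Z : Set (Fin d → ℝ)) →
      ClassicallyShattered Q (↑Z : Set (Fin d → ℝ))) :
    InvShattered r Q φ := by
  classical
  have hX : 0 < Fintype.card X := card_X_pos r hn
  have hXne : Nonempty X := Fintype.card_pos_iff.mp hX
  have hd : 1 ≤ d := one_le_d hXne φ hgp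
  set S := Finset.univ.image φ with hSdef
  have hScoe : (↑S : Set (Fin d → ℝ)) = Set.range φ := by
    rw [hSdef, Finset.coe_image, Finset.coe_univ, Set.image_univ]
  have hSgp : InGeneralPosition (↑S : Set (Fin d → ℝ)) := by rw [hScoe]; exact hgp
  have hcard : S.card ≤ N := le_trans (card_image_le_nequiv r φ hφinv) hN
  obtain ⟨Z, hSZ, hZcard, hZgp⟩ := exists_gp_superset hd (N - S.card) S hSgp
  have hZN : Z.card = N := by rw [hZcard]; omega
  have hcs := hshat Z hZN hZgp
  intro c hc
  obtain ⟨f, hf, hfz⟩ := hcs (fun z =>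
    if hz : ∃ x, φ x = z then c hz.choose else 0)
  refine ⟨f, hf, fun x => ?_⟩
  have hmem : φ x ∈ (↑Z : Set (Fin d → ℝ)) := by
    apply Finset.mem_coe.mpr (hSZ ?_)
    rw [hSdef]
    exact Finset.mem_image_of_mem φ (Finset.mem_univ x)
  have hthis := hfz (φ x) hmem
  rw [dif_pos (⟨x, rfl⟩ : ∃ x', φ x' = φ x)] at hthis
  rw [← hthis]
  exact (hc _ x (hmax _ x
    (Exists.choose_spec (⟨x, rfl⟩ : ∃ x', φ x' = φ x)))).symm

/-- **Proposition** (sufficient conditions for sample optimality with general probes):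
if `φ*` is invariant, a maximal invariant is `Q`-predictable from it, its representations
are in general position, and Cover's 1-capacity of `Q` is at least `n∼` (there is `N ≥ n∼`
such that every `N` points in general position are classically shattered by `Q`), then
`φ*` is sample optimal. -/
theorem sampleOptimal_of_capacity {X : Type*} [Fintype X] (r : Setoid X)
    (hn : 2 ≤ nequiv r) {d : ℕ} (Q : ProbingFamily d)
    (hQlin : ContainsLinear Q) (hQclosed : ClosedUnderVectorManipulation Q)
    (φ : X → Fin d → ℝ) (hφinv : IsInvariant r φ)
    (hpred : ∃ M : X → Fin (nequiv r), IsMaximalInvariant r M ∧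
        ∃ h ∈ rules Q (nequiv r), ∀ x, M x = h (φ x))
    (hgp : InGeneralPosition (Set.range φ))
    (hcap : ∃ N : ℕ, nequiv r ≤ N ∧
        ∀ Z : Finset (Fin d → ℝ), Z.card = N → InGeneralPosition (↑Z : Set (Fin d → ℝ)) →
          ClassicallyShattered Q (↑Z : Set (Fin d → ℝ))) :
    SampleOptimal r Q φ := by
  classical
  have hX : 0 < Fintype.card X := card_X_pos r hn
  obtain ⟨M, hM, h, -, hMh⟩ := hpred
  have hmax : ∀ x x', φ x = φ x' → r x x' := fun x x' hxx' =>
    (hM x x').1 (by rw [hMh, hMh, hxx'])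
  obtain ⟨N, hN, hcap'⟩ := hcap
  have hshat : InvShattered r Q φ :=
    invShattered_of_cap r hn φ hφinv hmax hgp hN hcap'
  have hrzφ : ∀ m : ℕ, 2 ≤ m → ∀ c : X → Fin m, IsInvariant r c →
      ∃ h ∈ rules Q m, ∀ x, h (φ x) = c x :=
    fun m hm2 c hc => realizable_of_invShattered hQlin hQclosed hshat hm2 c hc
  have hpop : PopOptimal r Q φ := popOptimal_of_realizable hrzφ
  refine ⟨hpop, ?_⟩
  intro n hn1 φ' hpop'
  have hrzφ' : ∀ m : ℕ, 2 ≤ m → m ≤ nequiv r → ∀ c : X → Fin m, IsInvariant r c →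
      ∃ h ∈ rules Q m, ∀ x, h (φ' x) = c x :=
    fun m hm2 hmn c hc => realizable_of_popOptimal hQlin hX hpop' hm2 hmn c hc
  unfold worstExcess
  set B := (Fintype.card (Fin n → X) : ℝ) with hB
  have hbdd' : BddAbove {e : ℝ | ∃ k : ℕ, 2 ≤ k ∧ k ≤ nequiv r ∧
      ∃ t : InvTask X r k, e = expExcess Q t φ' n} := by
    refine ⟨B, ?_⟩
    rintro e ⟨m, hm2, hmn, t, rfl⟩
    exact expExcess_le_card t φ' n (fun D =>
      excess_nonneg t (hrzφ' m hm2 hmn t.label t.label_inv) D)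
  apply Real.sSup_le
  · rintro e ⟨m, hm2, hmn, t, rfl⟩
    have h1 : expExcess Q t φ n ≤ expExcess Q t φ' n :=
      expExcess_mono t (fun D => excess_le t hφinv
        (hrzφ m hm2 t.label t.label_inv) (hrzφ' m hm2 hmn) D)
    have h2 : expExcess Q t φ' n ≤ sSup {e : ℝ | ∃ k : ℕ, 2 ≤ k ∧ k ≤ nequiv r ∧
        ∃ t : InvTask X r k, e = expExcess Q t φ' n} :=
      le_csSup hbdd' ⟨m, hm2, hmn, t, rfl⟩
    linarith
  · have c0inv : IsInvariant r (fun _ : X => (0 : Fin 2)) := fun _ _ _ => rfl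
    set t0 := mkTask r (le_refl 2) hX _ c0inv with ht0
    have h0 : (0:ℝ) ≤ expExcess Q t0 φ' n :=
      expExcess_nonneg t0 (fun D =>
        excess_nonneg t0 (hrzφ' 2 le_rfl hn t0.label t0.label_inv) D)
    have h2 : expExcess Q t0 φ' n ≤ sSup {e : ℝ | ∃ k : ℕ, 2 ≤ k ∧ k ≤ nequiv r ∧
        ∃ t : InvTask X r k, e = expExcess Q t φ' n} :=
      le_csSup hbdd' ⟨2, le_rfl, hn, t0, rfl⟩
    linarith

end ISSL
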